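/- arXiv:1110.5850 — 4 statements merged into one kernel-verified Lean document; each statement's English description precedes it below -/
import Mathlib

section
/- For all positive integers m and n, the cardinality of the set Γ_n^{(m)} of m-Dyck words of length n equals the higher Catalan number (1/(mn+1))·C(mn+n, n). -/
/-!
Let `W(k, c)` count the sequences of `k + 1` natural numbers whose first term is at most `c` and
whose increments are at most `m`. Splitting off the first term `j ≤ c` gives
`W(k + 1, c) = ∑_{j ≤ c} W(k, j + m)`, and a telescoping binomial identity shows that this
recursion is solved by `W(k, c) = (c + 1)/(k + 1) · C((m + 1)(k + 1) + c, k)`.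
For `c = 0` and `n = k + 1` this is `C((m + 1)n, n - 1)/n = C((m + 1)n, n)/(mn + 1)`.
-/

namespace MDyck

/-- The `m`-Dyck words of length `n + 1` are the elements of `Walk m n 0`. -/
def Walk (m n c : ℕ) : Type :=
  {g : Fin (n + 1) → ℕ // g 0 ≤ c ∧ ∀ i : Fin n, g i.succ ≤ g i.castSucc + m}

def walkZeroEquiv (m c : ℕ) : Walk m 0 c ≃ Fin (c + 1) where
  toFun g := ⟨g.1 0, Nat.lt_succ_of_le g.2.1⟩
  invFun j := ⟨fun _ => j, Nat.le_of_lt_succ j.2, Fin.elim0⟩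
  left_inv g := Subtype.ext <| funext fun i => by rw [Fin.fin_one_eq_zero i]
  right_inv _ := rfl

def walkSuccEquiv (m n c : ℕ) : Walk m (n + 1) c ≃ Σ j : Fin (c + 1), Walk m n (j + m) where
  toFun g := ⟨⟨g.1 0, Nat.lt_succ_of_le g.2.1⟩, Fin.tail g.1, g.2.2 0, fun i => g.2.2 i.succ⟩
  invFun p := ⟨Fin.cons p.1 p.2.1, Nat.le_of_lt_succ p.1.2, Fin.cases p.2.2.1 p.2.2.2⟩
  left_inv g := Subtype.ext (Fin.cons_self_tail g.1)
  right_inv _ := rfl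

instance (m n c : ℕ) : Finite (Walk m n c) := by
  induction n generalizing c with
  | zero => exact .of_equiv _ (walkZeroEquiv m c).symm
  | succ n ih => exact .of_equiv _ (walkSuccEquiv m n c).symm

theorem card_walk_zero (m c : ℕ) : Nat.card (Walk m 0 c) = c + 1 := by
  simp [Nat.card_congr (walkZeroEquiv m c)]

theorem card_walk_succ (m n c : ℕ) :
    Nat.card (Walk m (n + 1) c) = ∑ j ∈ Finset.range (c + 1), Nat.card (Walk m n (j + m)) := by
  rw [Nat.card_congr (walkSuccEquiv m n c), Nat.card_sigma,
    Fin.sum_univ_eq_sum_range (fun j => Nat.card (Walk m n (j + m)))]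

theorem sum_mul_choose_eq (m k c : ℕ) :
    (k + 2) * ∑ j ∈ Finset.range (c + 1), (j + m + 1) * (m * (k + 1) + k + 1 + (j + m)).choose k
      = (k + 1) * ((c + 1) * (m * (k + 2) + k + 2 + c).choose (k + 1)) := by
  induction c with
  | zero =>
    have h := Nat.add_one_mul_choose_eq (m * (k + 1) + k + 1 + m) k
    rw [show m * (k + 1) + k + 1 + m + 1 = m * (k + 2) + k + 2 by ring] at h
    simp only [zero_add, add_zero, Finset.sum_range_one]
    linear_combination h
  | succ c ih =>
    set N := m * (k + 2) + k + 2 + c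
    have absorb := Nat.choose_succ_right_eq N k
    rw [show N - k = m * (k + 2) + c + 2 by omega] at absorb
    rw [Finset.sum_range_succ, mul_add, ih,
      show m * (k + 2) + k + 2 + (c + 1) = N + 1 by omega,
      show m * (k + 1) + k + 1 + (c + 1 + m) = N by ring, Nat.choose_succ_succ' N k]
    zify at absorb ⊢
    linear_combination -absorb

theorem succ_mul_card_walk (m k c : ℕ) :
    (k + 1) * Nat.card (Walk m k c) = (c + 1) * (m * (k + 1) + k + 1 + c).choose k := by
  induction k generalizing c with
  | zero => simp [card_walk_zero]
  | succ k ih =>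
    refine Nat.eq_of_mul_eq_mul_left k.add_one_pos ?_
    calc (k + 1) * ((k + 2) * Nat.card (Walk m (k + 1) c))
        = (k + 2) * ∑ j ∈ Finset.range (c + 1), (k + 1) * Nat.card (Walk m k (j + m)) := by
          rw [card_walk_succ, ← Finset.mul_sum]; ring
      _ = (k + 1) * ((c + 1) * (m * (k + 1 + 1) + (k + 1) + 1 + c).choose (k + 1)) := by
          simp only [ih]
          rw [sum_mul_choose_eq]
          ring_nf

theorem card_walk_bound_zero_mul (m k : ℕ) :
    Nat.card (Walk m k 0) * (m * (k + 1) + 1) = (m * (k + 1) + (k + 1)).choose (k + 1) := by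
  have absorb := Nat.choose_succ_right_eq (m * (k + 1) + (k + 1)) k
  rw [show m * (k + 1) + (k + 1) - k = m * (k + 1) + 1 by omega] at absorb
  have h := succ_mul_card_walk m k 0
  rw [zero_add, one_mul, add_zero] at h
  refine Nat.eq_of_mul_eq_mul_right k.add_one_pos ?_
  rw [absorb, ← add_assoc, ← h]
  ring

end MDyck

theorem stmt5_general (m n : ℕ) (hn : 0 < n) :
    (Nat.card {g : Fin n → ℕ // g ⟨0, hn⟩ = 0 ∧
        ∀ (i : ℕ) (h : i + 1 < n), g ⟨i + 1, h⟩ ≤ g ⟨i, Nat.lt_of_succ_lt h⟩ + m} : ℚ)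
    = (1 / (m * n + 1)) * Nat.choose (m * n + n) n := by
  obtain ⟨k, rfl⟩ : ∃ k, n = k + 1 := ⟨n - 1, by omega⟩
  have dyck_equiv_walk : {g : Fin (k + 1) → ℕ // g ⟨0, hn⟩ = 0 ∧
      ∀ (i : ℕ) (h : i + 1 < k + 1), g ⟨i + 1, h⟩ ≤ g ⟨i, Nat.lt_of_succ_lt h⟩ + m} ≃
      MDyck.Walk m k 0 :=
    Equiv.subtypeEquivRight fun g =>
      and_congr Nat.le_zero.symm ⟨fun h i => h i (by omega), fun h i hi => h ⟨i, by omega⟩⟩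
  rw [Nat.card_congr dyck_equiv_walk, one_div_mul_eq_div, eq_div_iff (by positivity)]
  exact_mod_cast MDyck.card_walk_bound_zero_mul m k

/-- For `m, n ≥ 1`, the number of `m`-Dyck words of length `n` (sequences
`γ : Fin n → ℕ` with `γ 0 = 0` and `γ (i+1) ≤ γ i + m`) equals
`(1/(mn+1))·C(mn+n, n)`. -/
theorem stmt5 (m n : ℕ) (hm : 0 < m) (hn : 0 < n) :
    (Nat.card {g : Fin n → ℕ // g ⟨0, hn⟩ = 0 ∧
        ∀ (i : ℕ) (h : i + 1 < n), g ⟨i + 1, h⟩ ≤ g ⟨i, Nat.lt_of_succ_lt h⟩ + m} : ℚ)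
    = (1 / (m * n + 1)) * Nat.choose (m * n + n) n :=
  stmt5_general m n hn
end

section
/- For all positive integers m and n, the number of m-Dyck paths from (0,0) to (mn, n) — lattice paths using unit north and east steps that never go below the line segment from (0,0) to (mn,n) — equals (1/(mn+1))·C(mn+n, n). -/
/-!
The cycle lemma. Let a north step weigh `m` and an east step `-1`. A word of length
`N + 1 = mn + n + 1` with `n` north steps has total weight `-1`, so its partial sums, continued
periodically, drop by one per period; hence exactly one of its `N + 1` rotations has all proper
prefixes of nonnegative weight. That rotation ends with an east step, and deleting it leaves an
`m`-Dyck path. Thus `(N + 1) · #Dyck = C(N + 1, n) = (N + 1) / (mn + 1) · C(N, n)`.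
-/

open Finset Fin.NatCast

section CycleLemma

variable {L : ℕ} {S : ℕ → ℤ}

lemma eq_of_le_add_of_add_period_eq_sub_one (hS : ∀ k, S (k + L) = S k - 1) {a b : ℕ}
    (ha : a < L) (hb : b < L) (hSa : ∀ k < L, S a ≤ S (a + k))
    (hSb : ∀ k < L, S b ≤ S (b + k)) : a = b := by
  wlog hab : a ≤ b generalizing a b
  · exact (this hb ha hSb hSa (by omega)).symm
  by_contra hne
  have h₁ : S a ≤ S b := by simpa [Nat.add_sub_cancel' hab] using hSa (b - a) (by omega)
  have h₂ : S b ≤ S (a + L) := by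
    simpa [show b + (a + L - b) = a + L by omega] using hSb (a + L - b) (by omega)
  have := hS a
  omega

/-- The cycle lemma of Dvoretzky and Motzkin. -/
theorem existsUnique_le_add_of_add_period_eq_sub_one (hL : 0 < L)
    (hS : ∀ k, S (k + L) = S k - 1) : ∃! j, j < L ∧ ∀ k < L, S j ≤ S (j + k) := by
  have hmin : ∃ j, j < L ∧ ∀ i < L, S j ≤ S i := by
    obtain ⟨j, hj, hle⟩ := (range L).exists_min_image S ⟨0, mem_range.2 hL⟩
    exact ⟨j, mem_range.1 hj, fun i hi => hle i (mem_range.2 hi)⟩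
  obtain ⟨hjL, hjle⟩ := Nat.find_spec hmin
  have hlt : ∀ i < Nat.find hmin, S (Nat.find hmin) < S i := fun i hi => by
    by_contra! h
    exact Nat.find_min hmin hi ⟨by omega, fun i' hi' => h.trans (hjle i' hi')⟩
  have hstart : ∀ k < L, S (Nat.find hmin) ≤ S (Nat.find hmin + k) := fun k hk => by
    rcases lt_or_ge (Nat.find hmin + k) L with h | h
    · exact hjle _ h
    · have hper := hS (Nat.find hmin + k - L)
      rw [Nat.sub_add_cancel h] at hper
      have := hlt (Nat.find hmin + k - L) (by omega)
      omega
  exact ⟨Nat.find hmin, ⟨hjL, hstart⟩, fun j hj =>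
    eq_of_le_add_of_add_period_eq_sub_one hS hj.1 hjL hj.2 hstart⟩

end CycleLemma

/-- A path stays above `y = x / m` iff every prefix has `m · #north - #east ≥ 0`. -/
def stepWeight (m : ℕ) (b : Bool) : ℤ := if b then m else -1

lemma sum_stepWeight (m : ℕ) {ι : Type*} (s : Finset ι) (w : ι → Bool) :
    ∑ i ∈ s, stepWeight m (w i) = m * #{i ∈ s | w i = true} - #{i ∈ s | w i = false} := by
  rw [← sum_filter_add_sum_filter_not s (fun i => w i = true)]
  simp only [stepWeight]
  rw [sum_ite_of_true fun i hi => (mem_filter.1 hi).2,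
    sum_ite_of_false fun i hi => by simp [(mem_filter.1 hi).2]]
  simp only [sum_const, Int.nsmul_eq_mul, Bool.not_eq_true]
  ring

section Words

variable {L : ℕ} [NeZero L]

def rotate (j : Fin L) (w : Fin L → Bool) : Fin L → Bool := fun i => w (i + j)

@[simp] lemma rotate_rotate_neg (j : Fin L) (w : Fin L → Bool) :
    rotate j (rotate (-j) w) = w := by
  funext i; simp [rotate]

@[simp] lemma rotate_neg_rotate (j : Fin L) (w : Fin L → Bool) :
    rotate (-j) (rotate j w) = w := by
  simpa using rotate_rotate_neg (-j) w

lemma card_rotate_eq_true (j : Fin L) (w : Fin L → Bool) :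
    #{i | rotate j w i = true} = #{i | w i = true} :=
  card_equiv (Equiv.addRight j) fun i => by simp only [mem_filter]; simp [rotate]

variable (m : ℕ)

/-- Indices are read modulo `L`, so this is the height along the periodic extension of `w`. -/
def height (w : Fin L → Bool) (k : ℕ) : ℤ := ∑ i ∈ range k, stepWeight m (w i)

lemma height_add_length (w : Fin L → Bool) (k : ℕ) :
    height m w (k + L) = height m w k + height m w L := by
  rw [height, sum_range_add, height, height]
  congr 1
  simp only [Nat.cast_add]
  rw [← Fin.sum_univ_eq_sum_range (fun i => stepWeight m (w (k + i))),
    ← Fin.sum_univ_eq_sum_range (fun i => stepWeight m (w i))]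
  simp only [Fin.cast_val_eq_self]
  exact Fintype.sum_equiv (Equiv.addLeft (k : Fin L)) _ _ (fun _ => rfl)

lemma height_rotate (j : Fin L) (w : Fin L → Bool) (k : ℕ) :
    height m (rotate j w) k = height m w (j + k) - height m w j := by
  rw [height, height, height, sum_range_add, add_sub_cancel_left]
  refine sum_congr rfl fun i _ => ?_
  simp [rotate, add_comm]

lemma height_eq_of_le (w : Fin L → Bool) {k : ℕ} (hk : k ≤ L) :
    height m w k = m * #{i : Fin L | (i : ℕ) < k ∧ w i = true}
      - #{i : Fin L | (i : ℕ) < k ∧ w i = false} := by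
  have hrange : range k = {i ∈ range L | i < k} := by ext i; simp; omega
  rw [height, hrange, sum_filter, ← Fin.sum_univ_eq_sum_range (fun i => if i < k then _ else 0)]
  simp only [Fin.cast_val_eq_self]
  rw [← sum_filter, sum_stepWeight, filter_filter, filter_filter]

def NonnegProperPrefixes (w : Fin L → Bool) : Prop := ∀ k < L, 0 ≤ height m w k

lemma le_height_add_iff_nonnegProperPrefixes_rotate (j : Fin L) (w : Fin L → Bool) :
    (∀ k < L, height m w j ≤ height m w (j + k)) ↔ NonnegProperPrefixes m (rotate j w) := by
  simp only [NonnegProperPrefixes, height_rotate, sub_nonneg]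

lemma existsUnique_nonnegProperPrefixes_rotate {w : Fin L → Bool} (hw : height m w L = -1) :
    ∃! j : Fin L, NonnegProperPrefixes m (rotate j w) := by
  obtain ⟨j, ⟨hjL, hj⟩, huniq⟩ := existsUnique_le_add_of_add_period_eq_sub_one
    (Nat.pos_of_neZero L) (S := height m w) fun k => by rw [height_add_length, hw]; ring
  refine ⟨⟨j, hjL⟩, (le_height_add_iff_nonnegProperPrefixes_rotate m _ w).1 hj,
    fun j' hj' => Fin.ext (huniq j' ⟨j'.isLt, ?_⟩)⟩
  exact (le_height_add_iff_nonnegProperPrefixes_rotate m j' w).2 hj'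

lemma height_length (w : Fin L → Bool) :
    height m w L = m * #{i | w i = true} - #{i | w i = false} := by
  simp [height_eq_of_le m w le_rfl]

end Words

lemma card_fun_bool_eq_true_eq_choose {ι : Type*} [Fintype ι] [DecidableEq ι] (n : ℕ) :
    Nat.card {w : ι → Bool // #{i | w i = true} = n} = (Fintype.card ι).choose n := by
  let e : {w : ι → Bool // #{i | w i = true} = n} ≃ {s : Finset ι // #s = n} :=
    { toFun w := ⟨({i | w.1 i = true} : Finset ι), w.2⟩
      invFun s := ⟨fun i => decide (i ∈ s.1), by simpa using s.2⟩
      left_inv w := by ext; simp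
      right_inv s := by ext; simp }
  rw [Nat.card_congr e, Nat.card_eq_fintype_card, Fintype.card_finset_len]

section SnocEast

variable {N : ℕ} (d : Fin N → Bool)

lemma card_filter_snoc_false_eq_true :
    #{i | (Fin.snoc d false : Fin (N + 1) → Bool) i = true} = #{i | d i = true} := by
  rw [card_filter, card_filter, Fin.sum_univ_castSucc]
  simp

lemma card_filter_snoc_false_prefix {k : ℕ} (hk : k ≤ N) (b : Bool) :
    #{i : Fin (N + 1) | (i : ℕ) < k ∧ (Fin.snoc d false : Fin (N + 1) → Bool) i = b}
      = #{i : Fin N | (i : ℕ) < k ∧ d i = b} := by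
  rw [card_filter, card_filter, Fin.sum_univ_castSucc]
  simp [show ¬ N < k by omega]

lemma nonnegProperPrefixes_snoc_false_iff (m : ℕ) :
    NonnegProperPrefixes m (Fin.snoc d false : Fin (N + 1) → Bool) ↔
      ∀ k ≤ N, #{i : Fin N | (i : ℕ) < k ∧ d i = false}
        ≤ m * #{i : Fin N | (i : ℕ) < k ∧ d i = true} := by
  refine forall_congr' fun k => ?_
  rw [Nat.lt_succ_iff]
  refine imp_congr_right fun hk => ?_
  rw [height_eq_of_le m _ (by omega), card_filter_snoc_false_prefix d hk,
    card_filter_snoc_false_prefix d hk, sub_nonneg]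
  exact_mod_cast Iff.rfl

end SnocEast

section Counting

variable (m n : ℕ)

lemma height_length_eq_neg_one {w : Fin (m * n + n + 1) → Bool} (hw : #{i | w i = true} = n) :
    height m w (m * n + n + 1) = -1 := by
  have htotal := card_filter_add_card_filter_not (s := univ) (fun i => w i = true)
  simp only [Bool.not_eq_true, card_univ, Fintype.card_fin, hw] at htotal
  rw [height_length, hw, show #{i | w i = false} = m * n + 1 by omega]
  push_cast
  ring

lemma last_eq_false_of_nonnegProperPrefixes {N : ℕ} {u : Fin (N + 1) → Bool}
    (hu : height m u (N + 1) = -1) (h : NonnegProperPrefixes m u) : u (Fin.last N) = false := by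
  have hsucc : height m u (N + 1) = height m u N + stepWeight m (u (Fin.last N)) := by
    rw [height, sum_range_succ, Fin.natCast_eq_last]; rfl
  have := h N N.lt_succ_self
  cases hlast : u (Fin.last N)
  · rfl
  · simp only [hlast, stepWeight, if_true] at hsucc
    omega

def rotateBack (p : {u : Fin (m * n + n + 1) → Bool // #{i | u i = true} = n ∧
    NonnegProperPrefixes m u} × Fin (m * n + n + 1)) :
    {w : Fin (m * n + n + 1) → Bool // #{i | w i = true} = n} :=
  ⟨rotate (-p.2) p.1.1, (card_rotate_eq_true _ _).trans p.1.2.1⟩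

lemma rotateBack_bijective : Function.Bijective (rotateBack m n) := by
  constructor
  · rintro ⟨⟨u₁, hu₁⟩, j₁⟩ ⟨⟨u₂, hu₂⟩, j₂⟩ heq
    have hw : rotate (-j₁) u₁ = rotate (-j₂) u₂ := congrArg Subtype.val heq
    obtain ⟨j, -, huniq⟩ := existsUnique_nonnegProperPrefixes_rotate m (w := rotate (-j₁) u₁)
      (height_length_eq_neg_one m n ((card_rotate_eq_true _ _).trans hu₁.1))
    have hj : j₁ = j₂ := by
      rw [huniq j₁ (by simpa using hu₁.2), huniq j₂ (by simpa [hw] using hu₂.2)]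
    subst hj
    have hu : u₁ = u₂ := by simpa using congrArg (rotate j₁) hw
    subst hu
    rfl
  · rintro ⟨w, hw⟩
    obtain ⟨j, hj, -⟩ :=
      existsUnique_nonnegProperPrefixes_rotate m (height_length_eq_neg_one m n hw)
    exact ⟨⟨⟨rotate j w, (card_rotate_eq_true _ _).trans hw, hj⟩, j⟩,
      by simp [rotateBack]⟩

lemma card_nonnegProperPrefixes_mul_eq_choose :
    Nat.card {u : Fin (m * n + n + 1) → Bool // #{i | u i = true} = n ∧
      NonnegProperPrefixes m u} * (m * n + n + 1) = (m * n + n + 1).choose n := by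
  have hcard := Nat.card_eq_of_bijective _ (rotateBack_bijective m n)
  rwa [Nat.card_prod, Nat.card_fin, card_fun_bool_eq_true_eq_choose, Fintype.card_fin] at hcard

def IsDyckPath {N : ℕ} (s : Fin N → Bool) : Prop :=
  #{i | s i = true} = n ∧ ∀ k ≤ N,
    #{i : Fin N | (i : ℕ) < k ∧ s i = false} ≤ m * #{i : Fin N | (i : ℕ) < k ∧ s i = true}

lemma snoc_init_false_eq_self {u : Fin (m * n + n + 1) → Bool} (hu : #{i | u i = true} = n)
    (h : NonnegProperPrefixes m u) : Fin.snoc (Fin.init u) false = u := by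
  rw [← last_eq_false_of_nonnegProperPrefixes m (height_length_eq_neg_one m n hu) h,
    Fin.snoc_init_self]

def dyckPathEquiv : {s : Fin (m * n + n) → Bool // IsDyckPath m n s} ≃
    {u : Fin (m * n + n + 1) → Bool // #{i | u i = true} = n ∧ NonnegProperPrefixes m u} where
  toFun s := ⟨Fin.snoc s.1 false, (card_filter_snoc_false_eq_true _).trans s.2.1,
    (nonnegProperPrefixes_snoc_false_iff _ m).2 s.2.2⟩
  invFun u := ⟨Fin.init u.1, by
    have hu := snoc_init_false_eq_self m n u.2.1 u.2.2
    refine ⟨?_, (nonnegProperPrefixes_snoc_false_iff _ m).1 ?_⟩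
    · rw [← card_filter_snoc_false_eq_true, hu, u.2.1]
    · rw [hu]; exact u.2.2⟩
  left_inv s := by simp
  right_inv u := Subtype.ext (snoc_init_false_eq_self m n u.2.1 u.2.2)

theorem card_dyckPath_mul_eq_choose_succ :
    Nat.card {s : Fin (m * n + n) → Bool // IsDyckPath m n s} * (m * n + n + 1)
      = (m * n + n + 1).choose n := by
  rw [Nat.card_congr (dyckPathEquiv m n), card_nonnegProperPrefixes_mul_eq_choose]

theorem card_dyckPath_mul_eq_choose :
    Nat.card {s : Fin (m * n + n) → Bool // IsDyckPath m n s} * (m * n + 1)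
      = (m * n + n).choose n := by
  refine Nat.eq_of_mul_eq_mul_right (m * n + n).succ_pos ?_
  rw [Nat.choose_mul_succ_eq, ← card_dyckPath_mul_eq_choose_succ,
    show m * n + n + 1 - n = m * n + 1 by omega, Nat.succ_eq_add_one]
  ring

end Counting

theorem stmt6_general (m n : ℕ) :
    (Nat.card {s : Fin (m * n + n) → Bool //
        (Finset.univ.filter (fun i => s i = true)).card = n ∧
        ∀ k : ℕ, k ≤ m * n + n →
          (Finset.univ.filter (fun i : Fin (m * n + n) => (i : ℕ) < k ∧ s i = false)).card
            ≤ m * (Finset.univ.filter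
                (fun i : Fin (m * n + n) => (i : ℕ) < k ∧ s i = true)).card} : ℚ)
    = (1 / (m * n + 1)) * Nat.choose (m * n + n) n := by
  change (Nat.card {s : Fin (m * n + n) → Bool // IsDyckPath m n s} : ℚ) = _
  rw [← card_dyckPath_mul_eq_choose]
  push_cast
  field_simp

/-- For `m, n ≥ 1`, the number of `m`-Dyck paths of order `n` — lattice paths from
`(0,0)` to `(mn,n)` given by step sequences `s : Fin (mn+n) → Bool` (`true` = north,
`false` = east) with `n` north steps, staying weakly above the line `y = x/m` (after
each prefix of `k` steps, the number of east steps is at most `m` times the number of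
north steps) — equals `(1/(mn+1))·C(mn+n, n)`. -/
theorem stmt6 (m n : ℕ) (hm : 0 < m) (hn : 0 < n) :
    (Nat.card {s : Fin (m * n + n) → Bool //
        (Finset.univ.filter (fun i => s i = true)).card = n ∧
        ∀ k : ℕ, k ≤ m * n + n →
          (Finset.univ.filter (fun i : Fin (m * n + n) => (i : ℕ) < k ∧ s i = false)).card
            ≤ m * (Finset.univ.filter
                (fun i : Fin (m * n + n) => (i : ℕ) < k ∧ s i = true)).card} : ℚ)
    = (1 / (m * n + 1)) * Nat.choose (m * n + n) n :=
  stmt6_general m n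
end

section
/- Let n ≥ 2 and let π be an m-Dyck path of order n whose complementary partition λ(π) (the squares above π inside the mn×n triangle) has area A. If n ≥ 2A, then the m-bounce path of π has v_0 = n − ℓ(λ(π)), v_1 = ℓ(λ(π)), and v_i = 0 for all i ≥ 2, so that the bounce statistic b_m(π) = Σ_k k·v_k equals ℓ(λ(π)), the number of parts of λ(π). -/
/-- Let `π` be an `m`-Dyck path of order `n`, encoded by the monotone function
`x : ℕ → ℕ` where `x v` is the `x`-coordinate of the north step of `π` at heights
`[v, v+1]` (so `π` stays weakly above the diagonal iff `x v ≤ m·v`).  The rows of the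
complementary partition `λ(π)` are the `x v` for `v < n`, so its area is
`A = Σ_{v<n} x v` and its number of parts is `L = #{v < n : x v > 0}`.  The bounce path
is recorded by `u i` (the `x`-coordinate after `i` bounces), `H i` (the height after
`i` north moves) and the bounce heights `v i`, satisfying the defining recurrences.
If `n ≥ 2A` then `v 0 = n - L`, `v 1 = L`, `v i = 0` for `i ≥ 2`, and the bounce
statistic `b_m(π) = Σ_k k·(v k)` equals `L = ℓ(λ(π))`. -/
theorem stmt11 (m n : ℕ) (hm : 0 < m) (hn : 2 ≤ n)
    (x : ℕ → ℕ) (hmono : Monotone x) (hdyck : ∀ v, x v ≤ m * v)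
    (A L : ℕ) (hA : A = ∑ v ∈ Finset.range n, x v)
    (hL : L = ((Finset.range n).filter (fun v => 0 < x v)).card)
    (hnA : 2 * A ≤ n)
    (u H v : ℕ → ℕ)
    (hu0 : u 0 = 0) (hH0 : H 0 = 0)
    (hH : ∀ i, H (i + 1) = ((Finset.range n).filter (fun w => x w ≤ u i)).card)
    (hv : ∀ i, v i = H (i + 1) - H i)
    (hu : ∀ i, u (i + 1) = u i + ∑ j ∈ Finset.range m, (if j ≤ i then v (i - j) else 0)) :
    v 0 = n - L ∧ v 1 = L ∧ (∀ i, 2 ≤ i → v i = 0) ∧ (∑ᶠ k, k * v k) = L := by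
  have hL_le : L ≤ n := by
    rw [hL]
    exact (Finset.card_filter_le _ _).trans (by simp)
  -- key bound: every row is at most n - L
  have hkey : ∀ w ∈ Finset.range n, x w + L ≤ n := by
    intro w hw
    rcases Nat.eq_zero_or_pos (x w) with h0 | hpos
    · omega
    · have hwmem : w ∈ (Finset.range n).filter (fun v => 0 < x v) :=
        Finset.mem_filter.mpr ⟨hw, hpos⟩
      have hsum : x w + ∑ a ∈ ((Finset.range n).filter (fun v => 0 < x v)).erase w, x a
          = ∑ a ∈ (Finset.range n).filter (fun v => 0 < x v), x a :=
        Finset.add_sum_erase _ _ hwmem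
      have hErase : (L - 1) * 1 ≤
          ∑ a ∈ ((Finset.range n).filter (fun v => 0 < x v)).erase w, x a := by
        have := Finset.card_nsmul_le_sum
          ((((Finset.range n).filter (fun v => 0 < x v))).erase w) x 1
          (fun i hi => (Finset.mem_filter.mp (Finset.mem_erase.mp hi).2).2)
        simpa [Finset.card_erase_of_mem hwmem, hL, smul_eq_mul] using this
      have hAsum : ∑ a ∈ (Finset.range n).filter (fun v => 0 < x v), x a = A := by
        rw [hA]
        exact Finset.sum_filter_of_ne (by intro i _ h; omega)
      have hL1 : 1 ≤ L := by
        rw [hL]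
        exact Finset.card_pos.mpr ⟨w, hwmem⟩
      omega
  have hH1 : H 1 = n - L := by
    have hpart := Finset.card_filter_add_card_filter_not
      (s := Finset.range n) (p := fun v => 0 < x v)
    have heq : (Finset.range n).filter (fun w => x w ≤ u 0)
        = (Finset.range n).filter (fun v => ¬ 0 < x v) :=
      Finset.filter_congr (fun a _ => by rw [hu0]; constructor <;> omega)
    rw [hH 0, heq]
    simp only [Finset.card_range] at hpart
    omega
  have hv0 : v 0 = n - L := by
    rw [hv 0, hH1, hH0]
    omega
  have hu1 : u 1 = n - L := by
    rw [hu 0, hu0, zero_add,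
      Finset.sum_eq_single_of_mem 0 (Finset.mem_range.mpr hm)
        (fun b _ hb => if_neg (by omega))]
    simpa using hv0
  have humono : ∀ i, u i ≤ u (i + 1) := fun i => by
    rw [hu i]; exact Nat.le_add_right _ _
  have hu_ge : ∀ i, 1 ≤ i → n - L ≤ u i := by
    intro i hi
    induction i with
    | zero => omega
    | succ j ih =>
      rcases Nat.eq_zero_or_pos j with h | h
      · subst h; simpa using hu1.ge
      · exact (ih h).trans (humono j)
  have hHn : ∀ i, 1 ≤ i → H (i + 1) = n := by
    intro i hi
    rw [hH i]
    have : (Finset.range n).filter (fun w => x w ≤ u i) = Finset.range n :=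
      Finset.filter_true_of_mem (fun w hw =>
        le_trans (by have := hkey w hw; omega) (hu_ge i hi))
    rw [this, Finset.card_range]
  have hv1 : v 1 = L := by
    rw [hv 1, hHn 1 le_rfl, hH1]
    omega
  have hv2 : ∀ i, 2 ≤ i → v i = 0 := by
    intro i hi
    obtain ⟨j, rfl⟩ : ∃ j, i = j + 1 := ⟨i - 1, by omega⟩
    rw [hv (j + 1), hHn (j + 1) (by omega), hHn j (by omega)]
    omega
  have hfin : (∑ᶠ k, k * v k) = 1 * v 1 := by
    refine finsum_eq_single (fun k => k * v k) 1 ?_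
    intro b hb
    rcases Nat.lt_or_ge b 2 with h | h
    · interval_cases b
      · simp
      · exact absurd rfl hb
    · simp [hv2 b h]
  exact ⟨hv0, hv1, hv2, by rw [hfin, one_mul, hv1]⟩
end

section
/- For the modified Dyck path higher q,t-Catalan numbers, lim_{n→∞} q^{m·C(n,2)} DC_n^{(m)}(t, q^{-1}) = Π_{i≥1} 1/(1 − t q^i) = Σ_{λ ∈ Par} q^{|λ|} t^{ℓ(λ)}, where the limit is taken coefficientwise in the formal power series ring in q and t. -/
/-- `ccount n x u` is the number of heights `w < n` at which the path `x` is weakly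
left of the vertical line at `u`. -/
def ccount (n : ℕ) (x : ℕ → ℕ) (u : ℕ) : ℕ :=
  ((Finset.range n).filter (fun w => x w ≤ u)).card

/-- History of the heights reached by the bounce path: `bounceHist n m x i j` is the
height `H_{i-j}` reached after `i - j` north moves of the bounce path (`0` if `j ≥ i`).
The recurrence is `H_{i+1} = ccount n x u_i` where `u_i = H_i + H_{i-1} + ⋯ + H_{i-m+1}`
is the `x`-coordinate of the bounce path after `i` bounces. -/
def bounceHist (n m : ℕ) (x : ℕ → ℕ) : ℕ → ℕ → ℕ
  | 0 => fun _ => 0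
  | i + 1 => fun j =>
      if j = 0 then ccount n x (∑ k ∈ Finset.range m, bounceHist n m x i k)
      else bounceHist n m x i (j - 1)

/-- `H_i`, the height of the bounce path after `i` north moves. -/
def bounceH (n m : ℕ) (x : ℕ → ℕ) (i : ℕ) : ℕ := bounceHist n m x i 0

/-- The `m`-bounce statistic `b_m(π) = Σ_k k·v_k` with `v_k = H_{k+1} - H_k`. -/
noncomputable def bounceStat (n m : ℕ) (x : ℕ → ℕ) : ℕ :=
  ∑ᶠ k, k * (bounceH n m x (k + 1) - bounceH n m x k)

/-- `m`-Dyck paths of order `n`, encoded by the monotone function `x` giving the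
`x`-coordinate of the north step at each height; `x` is normalized to `m·n` above
height `n`. -/
def DyckSet (m n : ℕ) : Set (ℕ → ℕ) :=
  {x | Monotone x ∧ (∀ v, v < n → x v ≤ m * v) ∧ ∀ v, n ≤ v → x v = m * n}

/-- The topology of coefficientwise convergence on `ℚ[[q,t]]`. -/
noncomputable instance : TopologicalSpace (MvPowerSeries (Fin 2) ℚ) :=
  inferInstanceAs (TopologicalSpace ((Fin 2 →₀ ℕ) → ℚ))

/-!
For `n ≥ 2a`, a path with `Σ x_v = a` has at most `a` non-zero `x`-coordinates, each at most `a`,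
so the first bounce already reaches height `H_1 ≥ n - a ≥ a` and the second one reaches the top:
`b_m` is the number of non-zero coordinates. Reading these coordinates as parts is a bijection
with the partitions of `a`, under which `b_m` becomes the length. The bivariate generating function
of partitions is `Nat.Partition.genFun` with character `f(i, c) = t^c`, moved to `ℚ⟦q, t⟧` by
`MvPowerSeries.finSuccEquiv`; its `i`-th factor is the geometric series of `t q^i`.
-/

theorem sum_range_eq_sum_map_range {M : Type*} [AddCommMonoid M] (n : ℕ) (f : ℕ → M) :
    ∑ i ∈ Finset.range n, f i = ((List.range n).map f).sum := by
  rw [Finset.sum_eq_multiset_sum]; rfl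

theorem Nat.Partition.card_parts_le {a : ℕ} (μ : Nat.Partition a) : μ.parts.card ≤ a := by
  simpa [μ.parts_sum] using Multiset.card_nsmul_le_sum (a := 1) fun _ hp => μ.parts_pos hp

theorem Multiset.replicate_add_filter_ne {α : Type*} [DecidableEq α] (s : Multiset α) (b : α) :
    replicate (card s - card (s.filter (· ≠ b))) b + s.filter (· ≠ b) = s := by
  have hsplit := filter_add_not (· = b) s
  rw [filter_eq'] at hsplit
  have hcard := congrArg card hsplit
  rw [card_add, card_replicate] at hcard
  rw [← hcard, Nat.add_sub_cancel]
  exact hsplit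

theorem Multiset.toFinsupp_prod_pow {α M : Type*} [DecidableEq α] [CommMonoid M]
    (s : Multiset α) (t : M) : s.toFinsupp.prod (fun _ c => t ^ c) = t ^ card s := by
  rw [Finsupp.prod, Finset.prod_pow_eq_pow_sum, ← Multiset.toFinsupp_sum_eq, Finsupp.sum]
  rfl

theorem ccount_eq_countP (n : ℕ) (x : ℕ → ℕ) (u : ℕ) :
    ccount n x u = ((List.range n).map x).countP (· ≤ u) := by
  rw [ccount, List.countP_map, Finset.card_def, Finset.filter_val,
    ← Multiset.countP_eq_card_filter]
  exact Multiset.coe_countP _ _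

section Bounce

variable {n m : ℕ} {x : ℕ → ℕ}

theorem bounceH_one : bounceH n m x 1 = ccount n x 0 := by
  simp [bounceH, bounceHist]

theorem ccount_eq_of_forall_le {u : ℕ} (hx : ∀ w < n, x w ≤ u) : ccount n x u = n := by
  rw [ccount, Finset.filter_true_of_mem fun w hw => hx w (Finset.mem_range.1 hw),
    Finset.card_range]

theorem bounceH_succ_eq_of_le (hm : 0 < m) {i : ℕ} (hx : ∀ w < n, x w ≤ bounceH n m x i) :
    bounceH n m x (i + 1) = n := by
  have hH : bounceH n m x i ≤ ∑ k ∈ Finset.range m, bounceHist n m x i k :=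
    Finset.single_le_sum (fun _ _ => Nat.zero_le _) (Finset.mem_range.2 hm)
  simp only [bounceH, bounceHist, if_pos]
  exact ccount_eq_of_forall_le fun w hw => (hx w hw).trans hH

theorem bounceStat_eq_of_le_ccount (hm : 0 < m) (hx : ∀ w < n, x w ≤ ccount n x 0) :
    bounceStat n m x = n - ccount n x 0 := by
  have hccount : ccount n x 0 ≤ n := (Finset.card_filter_le _ _).trans_eq (Finset.card_range n)
  have hH : ∀ i ≥ 2, bounceH n m x i = n := by
    intro i hi
    induction i, hi using Nat.le_induction with
    | base => exact bounceH_succ_eq_of_le hm (bounceH_one (m := m) ▸ hx)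
    | succ i _ ih =>
      refine bounceH_succ_eq_of_le hm fun w hw => ?_
      rw [ih]
      exact (hx w hw).trans hccount
  rw [bounceStat, finsum_eq_single _ 1, hH 2 le_rfl, bounceH_one, one_mul]
  intro k hk
  rcases Nat.lt_or_ge k 2 with hk2 | hk2
  · obtain rfl : k = 0 := by omega
    exact zero_mul _
  · rw [hH k hk2, hH (k + 1) (by omega), Nat.sub_self, mul_zero]

theorem le_of_sum_range_eq {a : ℕ} (hsum : ∑ v ∈ Finset.range n, x v = a) {w : ℕ} (hw : w < n) :
    x w ≤ a :=
  hsum ▸ Finset.single_le_sum (fun _ _ => Nat.zero_le _) (Finset.mem_range.2 hw)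

theorem sub_sum_le_ccount_zero : n - ∑ v ∈ Finset.range n, x v ≤ ccount n x 0 := by
  set P := (Finset.range n).filter fun w => ¬ x w ≤ 0
  have hsplit : ccount n x 0 + P.card = n := by
    rw [ccount, Finset.card_filter_add_card_filter_not, Finset.card_range]
  have hP : P.card ≤ ∑ v ∈ Finset.range n, x v :=
    calc P.card ≤ ∑ v ∈ P, x v := by
          simpa using P.card_nsmul_le_sum x 1 fun w hw => by
            simpa [Nat.one_le_iff_ne_zero] using (Finset.mem_filter.1 hw).2
      _ ≤ ∑ v ∈ Finset.range n, x v := Finset.sum_le_sum_of_subset (Finset.filter_subset _ _)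
  omega

theorem bounceStat_eq_of_two_mul_le (hm : 0 < m) {a : ℕ}
    (hsum : ∑ v ∈ Finset.range n, x v = a) (hn : 2 * a ≤ n) :
    bounceStat n m x = n - ccount n x 0 := by
  refine bounceStat_eq_of_le_ccount hm fun w hw => ?_
  have := hsum ▸ sub_sum_le_ccount_zero (n := n) (x := x)
  have := le_of_sum_range_eq hsum hw
  omega

end Bounce

section PartitionPath

variable (m n : ℕ) {a : ℕ} (μ : Nat.Partition a)

def partitionList : List ℕ :=
  List.replicate (n - μ.parts.card) 0 ++ μ.parts.sort (· ≤ ·)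

def partitionPath (v : ℕ) : ℕ :=
  if v < n then (partitionList n μ).getD v 0 else m * n

theorem coe_partitionList :
    (partitionList n μ : Multiset ℕ) = Multiset.replicate (n - μ.parts.card) 0 + μ.parts := by
  rw [partitionList, ← Multiset.coe_add, Multiset.coe_replicate, Multiset.sort_eq]

theorem sum_partitionList : (partitionList n μ).sum = a := by
  rw [← Multiset.sum_coe, coe_partitionList, Multiset.sum_add, Multiset.sum_replicate,
    smul_zero, zero_add, μ.parts_sum]

theorem filter_ne_zero_partitionList :
    (partitionList n μ : Multiset ℕ).filter (· ≠ 0) = μ.parts := by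
  rw [coe_partitionList, Multiset.filter_add, Multiset.filter_eq_nil.2 fun _ h =>
      not_not.2 (Multiset.eq_of_mem_replicate h), zero_add,
    Multiset.filter_eq_self.2 fun _ h => (μ.parts_pos h).ne']

theorem pairwise_partitionList : (partitionList n μ).Pairwise (· ≤ ·) := by
  refine List.pairwise_append.2 ⟨List.pairwise_replicate.2 (Or.inr le_rfl),
    Multiset.pairwise_sort _ _, fun u hu _ _ => ?_⟩
  rw [List.eq_of_mem_replicate hu]
  exact Nat.zero_le _

theorem le_of_mem_partitionList {c : ℕ} (hc : c ∈ partitionList n μ) : c ≤ a := by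
  rw [← Multiset.mem_coe, coe_partitionList, Multiset.mem_add] at hc
  rcases hc with hc | hc
  · exact (Multiset.eq_of_mem_replicate hc).trans_le (Nat.zero_le a)
  · exact Nat.Partition.le_of_mem_parts hc

theorem getElem_partitionList_of_lt {v : ℕ} (hv : v < n - μ.parts.card)
    (hvL : v < (partitionList n μ).length) : (partitionList n μ)[v] = 0 := by
  simp only [partitionList]
  rw [List.getElem_append_left (by simpa using hv), List.getElem_replicate]

variable {n}

theorem length_partitionList (ha : a ≤ n) : (partitionList n μ).length = n := by
  have := μ.card_parts_le
  simp only [partitionList, List.length_append, List.length_replicate, Multiset.length_sort]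
  omega

theorem map_range_partitionPath (ha : a ≤ n) :
    (List.range n).map (partitionPath m n μ) = partitionList n μ := by
  have hlen := length_partitionList μ ha
  refine List.ext_getElem (by simp [hlen]) fun v hv _ => ?_
  have hvn : v < n := by simpa using hv
  simp [partitionPath, hvn, List.getElem?_eq_getElem (hlen ▸ hvn : v < _)]

theorem sum_range_partitionPath (ha : a ≤ n) :
    ∑ v ∈ Finset.range n, partitionPath m n μ v = a := by
  rw [sum_range_eq_sum_map_range, map_range_partitionPath m μ ha, sum_partitionList]

theorem ccount_partitionPath_zero (ha : a ≤ n) :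
    ccount n (partitionPath m n μ) 0 = n - μ.parts.card := by
  rw [ccount_eq_countP, map_range_partitionPath m μ ha, ← Multiset.coe_countP, coe_partitionList,
    Multiset.countP_add, Multiset.countP_eq_card.2 fun _ h => (Multiset.eq_of_mem_replicate h).le,
    Multiset.card_replicate, Multiset.countP_eq_zero.2 fun _ h => (μ.parts_pos h).not_ge, add_zero]

theorem partitionPath_of_lt (ha : a ≤ n) {v : ℕ} (hv : v < n) :
    partitionPath m n μ v =
      (partitionList n μ)[v]'(by rw [length_partitionList μ ha]; exact hv) := by
  rw [partitionPath, if_pos hv, List.getD_eq_getElem]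

theorem partitionPath_of_le {v : ℕ} (hv : n ≤ v) : partitionPath m n μ v = m * n :=
  if_neg (not_lt.2 hv)

theorem monotone_partitionPath (hm : 0 < m) (ha : a ≤ n) : Monotone (partitionPath m n μ) := by
  intro v w hvw
  by_cases hw : w < n
  · rw [partitionPath_of_lt m μ ha (hvw.trans_lt hw), partitionPath_of_lt m μ ha hw]
    rcases hvw.lt_or_eq with hvw | rfl
    · exact List.pairwise_iff_getElem.1 (pairwise_partitionList n μ) _ _ _ _ hvw
    · exact le_rfl
  · rw [partitionPath_of_le m μ (not_lt.1 hw)]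
    by_cases hv : v < n
    · rw [partitionPath_of_lt m μ ha hv]
      exact (le_of_mem_partitionList n μ (List.getElem_mem _)).trans
        (ha.trans (Nat.le_mul_of_pos_left n hm))
    · rw [partitionPath_of_le m μ (not_lt.1 hv)]

theorem partitionPath_mem_dyckSet (hm : 0 < m) (hn : 2 * a ≤ n) :
    partitionPath m n μ ∈ DyckSet m n := by
  have ha : a ≤ n := by omega
  refine ⟨monotone_partitionPath m μ hm ha, fun v hv => ?_, fun v hv => partitionPath_of_le m μ hv⟩
  rw [partitionPath_of_lt m μ ha hv]
  by_cases hvz : v < n - μ.parts.card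
  · rw [getElem_partitionList_of_lt n μ hvz]
    exact Nat.zero_le _
  · have := μ.card_parts_le
    calc _ ≤ a := le_of_mem_partitionList n μ (List.getElem_mem _)
      _ ≤ v := by omega
      _ ≤ m * v := Nat.le_mul_of_pos_left v hm

theorem bounceStat_partitionPath (hm : 0 < m) (hn : 2 * a ≤ n) :
    bounceStat n m (partitionPath m n μ) = μ.parts.card := by
  have ha : a ≤ n := by omega
  rw [bounceStat_eq_of_two_mul_le hm (sum_range_partitionPath m μ ha) hn,
    ccount_partitionPath_zero m μ ha]
  have := μ.card_parts_le
  omega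

theorem partitionPath_injective (ha : a ≤ n) :
    Function.Injective (partitionPath m n : Nat.Partition a → ℕ → ℕ) := by
  intro μ ν h
  have hL : partitionList n μ = partitionList n ν := by
    rw [← map_range_partitionPath m μ ha, ← map_range_partitionPath m ν ha, h]
  exact Nat.Partition.ext (by
    rw [← filter_ne_zero_partitionList n μ, ← filter_ne_zero_partitionList n ν, hL])

theorem exists_partitionPath_eq {x : ℕ → ℕ} (hx : x ∈ DyckSet m n)
    (hsum : ∑ v ∈ Finset.range n, x v = a) : ∃ μ : Nat.Partition a, partitionPath m n μ = x := by
  obtain ⟨hmono, -, htop⟩ := hx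
  set L := (List.range n).map x
  have hLsum : (L : Multiset ℕ).sum = a := by
    rw [Multiset.sum_coe, ← sum_range_eq_sum_map_range, hsum]
  refine ⟨Nat.Partition.ofSums a L hLsum, funext fun v => ?_⟩
  have hL : partitionList n (Nat.Partition.ofSums a L hLsum) = L := by
    refine List.Perm.eq_of_pairwise' (pairwise_partitionList n _)
      (List.pairwise_map.2 (List.pairwise_lt_range.imp fun h => hmono h.le))
      (Multiset.coe_eq_coe.1 ?_)
    have hcard : Multiset.card (L : Multiset ℕ) = n := by simp [L]
    rw [coe_partitionList, ← hcard]
    exact Multiset.replicate_add_filter_ne (L : Multiset ℕ) 0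
  rcases Nat.lt_or_ge v n with hv | hv
  · simp [partitionPath, hv, hL, L]
  · rw [partitionPath_of_le m _ hv, htop v hv]

end PartitionPath

theorem ncard_dyckSet_eq_card_partitions {m : ℕ} (hm : 0 < m) {a n : ℕ} (hn : 2 * a ≤ n) (b : ℕ) :
    Set.ncard {x : ℕ → ℕ | x ∈ DyckSet m n ∧
        (∑ v ∈ Finset.range n, x v) = a ∧ bounceStat n m x = b}
      = Fintype.card {μ : Nat.Partition a // μ.parts.card = b} := by
  have ha : a ≤ n := by omega
  have hS : {x : ℕ → ℕ | x ∈ DyckSet m n ∧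
      (∑ v ∈ Finset.range n, x v) = a ∧ bounceStat n m x = b}
      = partitionPath m n '' {μ : Nat.Partition a | μ.parts.card = b} := by
    ext x
    constructor
    · rintro ⟨hx, hsum, rfl⟩
      obtain ⟨μ, rfl⟩ := exists_partitionPath_eq m hx hsum
      exact ⟨μ, (bounceStat_partitionPath m μ hm hn).symm, rfl⟩
    · rintro ⟨μ, rfl, rfl⟩
      exact ⟨partitionPath_mem_dyckSet m μ hm hn, sum_range_partitionPath m μ ha,
        bounceStat_partitionPath m μ hm hn⟩
  rw [hS, Set.ncard_image_of_injective _ (partitionPath_injective m ha),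
    Set.ncard_eq_toFinset_card', Set.toFinset_card]
  rfl

open scoped MvPowerSeries.WithPiTopology PowerSeries.WithPiTopology

namespace MvPowerSeries

variable {R : Type*} [CommSemiring R] {n : ℕ}

theorem coeff_finSuccEquiv_symm (P : PowerSeries (MvPowerSeries (Fin n) R))
    (e : Fin (n + 1) →₀ ℕ) :
    coeff e ((finSuccEquiv R n).symm P) = coeff e.tail (PowerSeries.coeff (e 0) P) := by
  conv_rhs => rw [← (finSuccEquiv R n).apply_symm_apply P]
  rw [coeff_coeff_finSuccEquiv, Finsupp.cons_tail]

theorem continuous_finSuccEquiv_symm [TopologicalSpace R] :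
    Continuous (finSuccEquiv R n).symm := by
  refine continuous_pi fun e => ?_
  simp_rw [← coeff_apply, coeff_finSuccEquiv_symm]
  exact (WithPiTopology.continuous_coeff R _).comp (PowerSeries.WithPiTopology.continuous_coeff _ _)

end MvPowerSeries

namespace PowerSeries

variable {R : Type*} [CommRing R] [TopologicalSpace R] [IsTopologicalRing R] [T2Space R]

theorem one_sub_C_mul_X_pow_mul_one_add_tsum (r : R) (k : ℕ) :
    (1 - C r * X ^ (k + 1)) * (1 + ∑' j, r ^ (j + 1) • (X : R⟦X⟧) ^ ((k + 1) * (j + 1))) = 1 := by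
  have h0 : constantCoeff (C r * X ^ (k + 1) : R⟦X⟧) = 0 := by simp
  convert WithPiTopology.one_sub_mul_tsum_pow_of_constantCoeff_eq_zero h0 using 2
  rw [(WithPiTopology.summable_pow_of_constantCoeff_eq_zero h0).tsum_eq_zero_add]
  simp [mul_pow, ← pow_mul, smul_eq_C_mul, map_pow]

end PowerSeries

namespace MvPowerSeries

theorem finSuccEquiv_symm_one_add_tsum_eq_inv {k : Type*} [Field k] [TopologicalSpace k]
    [IsTopologicalRing k] [T2Space k] (i : ℕ) :
    (finSuccEquiv k 1).symm
        (1 + ∑' j, (X 0 : MvPowerSeries (Fin 1) k) ^ (j + 1) • PowerSeries.X ^ ((i + 1) * (j + 1)))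
      = (1 - X 1 * X 0 ^ (i + 1))⁻¹ := by
  rw [MvPowerSeries.eq_inv_iff_mul_eq_one (by simp)]
  apply (finSuccEquiv k 1).injective
  rw [map_mul, AlgEquiv.apply_symm_apply, mul_comm, map_one, map_sub, map_one, map_mul, map_pow,
    finSuccEquiv_X_zero, show (1 : Fin 2) = (0 : Fin 1).succ from rfl, finSuccEquiv_X_succ]
  exact PowerSeries.one_sub_C_mul_X_pow_mul_one_add_tsum _ _

theorem finSuccEquiv_symm_genFun_X_pow {R : Type*} [CommSemiring R] :
    (finSuccEquiv R 1).symm (Nat.Partition.genFun fun _ c => (X 0 : MvPowerSeries (Fin 1) R) ^ c)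
      = fun e => (Fintype.card {μ : Nat.Partition (e 0) // μ.parts.card = e 1} : R) := by
  ext e
  rw [coeff_finSuccEquiv_symm, Nat.Partition.coeff_genFun, map_sum]
  simp_rw [Multiset.toFinsupp_prod_pow, coeff_X_pow]
  have htail : ∀ c, e.tail = Finsupp.single 0 c ↔ c = e 1 := fun c => by
    rw [Finsupp.ext_iff, Fin.forall_fin_one, Finsupp.tail_apply, Finsupp.single_eq_same, eq_comm]
    rfl
  simp_rw [htail, Finset.sum_boole, Fintype.card_subtype]
  rfl

end MvPowerSeries

open MvPowerSeries in
theorem partitionGenFun_eq_tprod :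
    ((fun e : Fin 2 →₀ ℕ =>
        (Fintype.card {μ : Nat.Partition (e 0) // μ.parts.card = e 1} : ℚ)) :
      MvPowerSeries (Fin 2) ℚ)
    = ∏' i : ℕ,
        (1 - MvPowerSeries.X 1 * MvPowerSeries.X 0 ^ (i + 1) :
          MvPowerSeries (Fin 2) ℚ)⁻¹ := by
  have h := (Nat.Partition.hasProd_genFun fun _ c => (X 0 : MvPowerSeries (Fin 1) ℚ) ^ c).map
    (finSuccEquiv ℚ 1).symm continuous_finSuccEquiv_symm
  rw [finSuccEquiv_symm_genFun_X_pow] at h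
  simp only [Function.comp_def, finSuccEquiv_symm_one_add_tsum_eq_inv] at h
  exact h.tprod_eq.symm

/-- `lim_{n→∞} q^{m·C(n,2)} DC_n^{(m)}(t, q⁻¹) = Π_{i≥1} (1 - t q^i)⁻¹
  = Σ_{λ ∈ Par} q^{|λ|} t^{ℓ(λ)}`: coefficientwise, the number of `m`-Dyck paths of
order `n` with `area^c = a` and bounce `b` stabilizes, for `n` large, at the number of
partitions of `a` with `b` parts, and the resulting power series is the infinite
product. -/
theorem stmt12 (m : ℕ) (hm : 0 < m) :
    (∀ a b : ℕ, ∃ N : ℕ, ∀ n ≥ N,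
      Set.ncard {x : ℕ → ℕ | x ∈ DyckSet m n ∧
          (∑ v ∈ Finset.range n, x v) = a ∧ bounceStat n m x = b}
      = Fintype.card {μ : Nat.Partition a // μ.parts.card = b}) ∧
    ((fun e : Fin 2 →₀ ℕ =>
        (Fintype.card {μ : Nat.Partition (e 0) // μ.parts.card = e 1} : ℚ)) :
      MvPowerSeries (Fin 2) ℚ)
    = ∏' i : ℕ,
        (1 - MvPowerSeries.X 1 * MvPowerSeries.X 0 ^ (i + 1) :
          MvPowerSeries (Fin 2) ℚ)⁻¹ :=
  ⟨fun a b => ⟨2 * a, fun _ hn => ncard_dyckSet_eq_card_partitions hm hn b⟩, partitionGenFun_eq_tprod⟩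
end
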